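/- arXiv:1312.3034 — 2 statements merged into one kernel-verified Lean document; each statement's English description precedes it below -/
import Mathlib

section
/- Let α_1,...,α_l ≥ 0 with Σ_{i=1}^l α_i/(r_i−1)! ≤ 1, and let H be a {1, r_1, ..., r_l}-graph with 1 < r_1 < ... < r_l. If V(H^1) ≠ D(H[V(H^1)]), then L(H) = L(H[V(H^1) \ D(H[V(H^1)])]); and if V(H^1) = D(H[V(H^1)]), then L(H) = 1. -/
open Finset

def simplexS (n : ℕ) : Set (Fin n → ℝ) :=
  {x | (∀ i, 0 ≤ x i) ∧ ∑ i, x i = 1}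

/-- L(H,x) for a {1,r_1,...,r_l}-graph with 1-edges `E1`, higher edges `E`, and
weight `α r` on edges of cardinality `r`. -/
def wLag1 {n : ℕ} (α : ℕ → ℝ) (E1 : Finset (Fin n)) (E : Finset (Finset (Fin n)))
    (x : Fin n → ℝ) : ℝ :=
  (∑ i ∈ E1, x i) + ∑ e ∈ E, α e.card * ∏ v ∈ e, x v

/-- The weighted Graph-Lagrangian L(H) (supremum over the standard simplex). -/
noncomputable def wLagMax {n : ℕ} (α : ℕ → ℝ) (E1 : Finset (Fin n))
    (E : Finset (Finset (Fin n))) : ℝ :=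
  sSup (wLag1 α E1 E '' simplexS n)

/-- Isolated vertices of the subgraph of `(E1, E)` induced on `V(H^1) = E1`:
vertices of `E1` lying in no induced edge of size ≥ 2. -/
def isolatedSet {n : ℕ} (E1 : Finset (Fin n)) (E : Finset (Finset (Fin n))) :
    Finset (Fin n) :=
  E1.filter (fun i => ∀ e ∈ E, e ⊆ E1 → i ∉ e)

/-! Fix `x` in the simplex. The edges through a vertex `j` contribute at most
`x j * ∑ r, α r * e_{r-1}(x) ≤ x j * ∑ r, α r / (r-1)! ≤ x j`, because `m! * e_m(x) ≤ (∑ i, x i)^m`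
for the elementary symmetric sums `e_m`. Charging each edge not contained in `V(H^1)` to one of
its vertices outside `V(H^1)` therefore gives `L(H, x) ≤ 1 + λ(x)`, where `λ(x)` is the
contribution of the edges inside `V(H^1)`; these are exactly the edges inside
`W = V(H^1) \ D(H[V(H^1)])`. Moving all the mass outside `W` onto one vertex of `W` keeps `λ` from
decreasing and makes the linear part equal to `1`, so `L(H) ≤ L(H[W])`; the reverse inequality is
monotonicity. If `W = ∅` then `λ = 0`, and the bound `1` is attained at a vertex of `V(H^1)`. -/

section SymmetricSums

variable {ι R : Type*} [DecidableEq ι] [CommSemiring R] [PartialOrder R] [IsOrderedRing R]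

theorem sum_filter_mem_powersetCard_succ_erase {M : Type*} [AddCommMonoid M] (s : Finset ι)
    (m : ℕ) {v : ι} (hv : v ∈ s) (f : Finset ι → M) :
    ∑ S ∈ (s.powersetCard (m + 1)).filter (v ∈ ·), f (S.erase v) =
      ∑ T ∈ (s.erase v).powersetCard m, f T := by
  refine sum_nbij' (·.erase v) (insert v) ?_ ?_ ?_ ?_ (fun _ _ => rfl)
  · intro S hS
    simp only [mem_filter, mem_powersetCard] at hS ⊢
    exact ⟨erase_subset_erase v hS.1.1, by rw [card_erase_of_mem hS.2, hS.1.2, Nat.add_sub_cancel]⟩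
  · intro T hT
    simp only [mem_filter, mem_powersetCard] at hT ⊢
    have hvT : v ∉ T := fun h => notMem_erase v s (hT.1 h)
    exact ⟨⟨insert_subset hv (hT.1.trans (erase_subset v s)),
      by rw [card_insert_of_notMem hvT, hT.2]⟩, mem_insert_self v T⟩
  · intro S hS
    exact insert_erase (mem_filter.1 hS).2
  · intro T hT
    exact erase_insert fun h => notMem_erase v s ((mem_powersetCard.1 hT).1 h)

theorem succ_mul_sum_powersetCard_succ_prod_le (s : Finset ι) {x : ι → R}
    (hx : ∀ i ∈ s, 0 ≤ x i) (m : ℕ) :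
    ((m + 1 : ℕ) : R) * ∑ S ∈ s.powersetCard (m + 1), ∏ v ∈ S, x v ≤
      (∑ i ∈ s, x i) * ∑ S ∈ s.powersetCard m, ∏ v ∈ S, x v := by
  have hcount : ((m + 1 : ℕ) : R) * ∑ S ∈ s.powersetCard (m + 1), ∏ v ∈ S, x v =
      ∑ v ∈ s, x v * ∑ S ∈ (s.powersetCard (m + 1)).filter (v ∈ ·), ∏ w ∈ S.erase v, x w := by
    calc ((m + 1 : ℕ) : R) * ∑ S ∈ s.powersetCard (m + 1), ∏ v ∈ S, x v
        = ∑ S ∈ s.powersetCard (m + 1), ∑ v ∈ S, x v * ∏ w ∈ S.erase v, x w := by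
          rw [mul_sum]
          refine sum_congr rfl fun S hS => ?_
          rw [sum_congr rfl fun v hv => mul_prod_erase S x hv, sum_const,
            (mem_powersetCard.1 hS).2, nsmul_eq_mul]
      _ = ∑ v ∈ s, ∑ S ∈ (s.powersetCard (m + 1)).filter (v ∈ ·), x v * ∏ w ∈ S.erase v, x w :=
          sum_comm' fun S v => by
            simp only [mem_filter, mem_powersetCard]
            exact ⟨fun h => ⟨⟨h.1, h.2⟩, h.1.1 h.2⟩, fun h => h.1⟩
      _ = _ := by simp only [mul_sum]
  rw [hcount, sum_mul]
  refine sum_le_sum fun v hv => ?_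
  rw [sum_filter_mem_powersetCard_succ_erase s m hv fun T => ∏ w ∈ T, x w]
  refine mul_le_mul_of_nonneg_left (sum_le_sum_of_subset_of_nonneg
    (powersetCard_mono (erase_subset v s)) fun T hT _ => prod_nonneg fun w hw => ?_) (hx v hv)
  exact hx w ((mem_powersetCard.1 hT).1 hw)

theorem factorial_mul_sum_powersetCard_prod_le_pow (s : Finset ι) {x : ι → R}
    (hx : ∀ i ∈ s, 0 ≤ x i) (m : ℕ) :
    (m.factorial : R) * ∑ S ∈ s.powersetCard m, ∏ v ∈ S, x v ≤ (∑ i ∈ s, x i) ^ m := by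
  induction m with
  | zero => simp
  | succ m ih =>
    calc ((m + 1).factorial : R) * ∑ S ∈ s.powersetCard (m + 1), ∏ v ∈ S, x v
        = m.factorial * (((m + 1 : ℕ) : R) * ∑ S ∈ s.powersetCard (m + 1), ∏ v ∈ S, x v) := by
          rw [Nat.factorial_succ, Nat.cast_mul, mul_comm ((m + 1 : ℕ) : R), mul_assoc]
      _ ≤ m.factorial * ((∑ i ∈ s, x i) * ∑ S ∈ s.powersetCard m, ∏ v ∈ S, x v) :=
          mul_le_mul_of_nonneg_left (succ_mul_sum_powersetCard_succ_prod_le s hx m)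
            (Nat.cast_nonneg _)
      _ = (∑ i ∈ s, x i) * (m.factorial * ∑ S ∈ s.powersetCard m, ∏ v ∈ S, x v) := by ring
      _ ≤ (∑ i ∈ s, x i) * (∑ i ∈ s, x i) ^ m :=
          mul_le_mul_of_nonneg_left ih (sum_nonneg hx)
      _ = (∑ i ∈ s, x i) ^ (m + 1) := (pow_succ' _ _).symm

theorem sum_prod_erase_le_sum_powersetCard {s : Finset ι} {x : ι → R} (hx : ∀ i ∈ s, 0 ≤ x i)
    {F : Finset (Finset ι)} {j : ι} {r : ℕ} (hF : ∀ e ∈ F, e ⊆ s ∧ j ∈ e ∧ e.card = r) :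
    ∑ e ∈ F, ∏ v ∈ e.erase j, x v ≤ ∑ T ∈ s.powersetCard (r - 1), ∏ v ∈ T, x v := by
  have hinj : ∀ e ∈ F, ∀ e' ∈ F, e.erase j = e'.erase j → e = e' := fun e he e' he' h => by
    rw [← insert_erase (hF e he).2.1, ← insert_erase (hF e' he').2.1, h]
  rw [← sum_image (f := fun T => ∏ v ∈ T, x v) hinj]
  refine sum_le_sum_of_subset_of_nonneg (fun T hT => ?_)
    fun T hT _ => prod_nonneg fun v hv => hx v ((mem_powersetCard.1 hT).1 hv)
  obtain ⟨e, he, rfl⟩ := mem_image.1 hT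
  obtain ⟨hes, hje, hcard⟩ := hF e he
  exact mem_powersetCard.2 ⟨(erase_subset j e).trans hes, by rw [card_erase_of_mem hje, hcard]⟩

end SymmetricSums

section WeightedLagrangian

variable {n : ℕ} {rs : Finset ℕ} {α : ℕ → ℝ}

theorem sum_filter_mem_mul_prod_le {E : Finset (Finset (Fin n))} (hα : ∀ r ∈ rs, 0 ≤ α r)
    (hsum : ∑ r ∈ rs, α r / ((r - 1).factorial : ℝ) ≤ 1) (hE : ∀ e ∈ E, e.card ∈ rs)
    {x : Fin n → ℝ} (hx : x ∈ simplexS n) (j : Fin n) :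
    ∑ e ∈ E.filter (j ∈ ·), α e.card * ∏ v ∈ e, x v ≤ x j := by
  obtain ⟨hx0, hx1⟩ := hx
  set F := E.filter (j ∈ ·)
  have hlevel (r : ℕ) :
      ∑ e ∈ F.filter (·.card = r), ∏ v ∈ e.erase j, x v ≤ 1 / ((r - 1).factorial : ℝ) := by
    rw [le_div_iff₀ (by positivity), mul_comm]
    refine le_trans (mul_le_mul_of_nonneg_left (sum_prod_erase_le_sum_powersetCard (s := univ)
      (r := r) (fun i _ => hx0 i) fun e he => ?_) (Nat.cast_nonneg _)) ?_
    · simp only [F, mem_filter] at he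
      exact ⟨subset_univ e, he.1.2, he.2⟩
    · simpa only [hx1, one_pow] using
        factorial_mul_sum_powersetCard_prod_le_pow univ (fun i _ => hx0 i) (r - 1)
  calc ∑ e ∈ F, α e.card * ∏ v ∈ e, x v
      = x j * ∑ r ∈ rs, α r * ∑ e ∈ F.filter (·.card = r), ∏ v ∈ e.erase j, x v := by
        rw [← sum_fiberwise_of_maps_to (g := card) (t := rs) fun e he => hE e (mem_filter.1 he).1,
          mul_sum]
        refine sum_congr rfl fun r _ => ?_
        rw [mul_sum, mul_sum]
        refine sum_congr rfl fun e he => ?_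
        simp only [F, mem_filter] at he
        obtain ⟨⟨-, hje⟩, rfl⟩ := he
        rw [← mul_prod_erase e x hje]
        ring
    _ ≤ x j * ∑ r ∈ rs, α r / ((r - 1).factorial : ℝ) := by
        refine mul_le_mul_of_nonneg_left (sum_le_sum fun r hr => ?_) (hx0 j)
        rw [div_eq_mul_one_div]
        exact mul_le_mul_of_nonneg_left (hlevel r) (hα r hr)
    _ ≤ x j := mul_le_of_le_one_right (hx0 j) hsum

theorem sum_filter_not_subset_le {E : Finset (Finset (Fin n))} (hα : ∀ r ∈ rs, 0 ≤ α r)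
    (hsum : ∑ r ∈ rs, α r / ((r - 1).factorial : ℝ) ≤ 1) (hE : ∀ e ∈ E, e.card ∈ rs)
    {x : Fin n → ℝ} (hx : x ∈ simplexS n) (E1 : Finset (Fin n)) :
    ∑ e ∈ E.filter (¬ · ⊆ E1), α e.card * ∏ v ∈ e, x v ≤ ∑ j ∈ univ \ E1, x j := by
  have hnn : ∀ e ∈ E, 0 ≤ α e.card * ∏ v ∈ e, x v := fun e he =>
    mul_nonneg (hα _ (hE e he)) (prod_nonneg fun v _ => hx.1 v)
  calc ∑ e ∈ E.filter (¬ · ⊆ E1), α e.card * ∏ v ∈ e, x v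
      ≤ ∑ e ∈ E, ∑ j ∈ (univ \ E1).filter (· ∈ e), α e.card * ∏ v ∈ e, x v := by
        rw [sum_filter]
        refine sum_le_sum fun e he => ?_
        split_ifs with hsub
        · exact sum_nonneg fun _ _ => hnn e he
        · obtain ⟨j, hje, hjE1⟩ := not_subset.1 hsub
          exact single_le_sum (f := fun _ => α e.card * ∏ v ∈ e, x v) (fun _ _ => hnn e he)
            (show j ∈ (univ \ E1).filter (· ∈ e) by simp [hje, hjE1])
    _ = ∑ j ∈ univ \ E1, ∑ e ∈ E.filter (j ∈ ·), α e.card * ∏ v ∈ e, x v :=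
        sum_comm' fun e j => by simp only [mem_filter]; tauto
    _ ≤ ∑ j ∈ univ \ E1, x j := sum_le_sum fun j _ => sum_filter_mem_mul_prod_le hα hsum hE hx j

theorem wLag1_le_one_add_sum_filter_subset {E : Finset (Finset (Fin n))} (hα : ∀ r ∈ rs, 0 ≤ α r)
    (hsum : ∑ r ∈ rs, α r / ((r - 1).factorial : ℝ) ≤ 1) (hE : ∀ e ∈ E, e.card ∈ rs)
    {x : Fin n → ℝ} (hx : x ∈ simplexS n) (E1 : Finset (Fin n)) :
    wLag1 α E1 E x ≤ 1 + ∑ e ∈ E.filter (· ⊆ E1), α e.card * ∏ v ∈ e, x v := by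
  have hcross := sum_filter_not_subset_le hα hsum hE hx E1
  have hsplit : ∑ j ∈ univ \ E1, x j + ∑ i ∈ E1, x i = 1 := by
    rw [sum_sdiff (subset_univ E1), hx.2]
  rw [wLag1, ← sum_filter_add_sum_filter_not E (· ⊆ E1)]
  linarith

theorem simplexS_eq_stdSimplex : simplexS n = stdSimplex ℝ (Fin n) := rfl

theorem bddAbove_wLag1_image {E1 : Finset (Fin n)} {E : Finset (Finset (Fin n))} :
    BddAbove (wLag1 α E1 E '' simplexS n) :=
  (simplexS_eq_stdSimplex ▸ isCompact_stdSimplex ℝ (Fin n)).bddAbove_image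
    (by unfold wLag1; fun_prop)

theorem wLag1_single {E1 : Finset (Fin n)} {E : Finset (Finset (Fin n))}
    (hE : ∀ e ∈ E, 1 < e.card) {i : Fin n} (hi : i ∈ E1) : wLag1 α E1 E (Pi.single i 1) = 1 := by
  have hedge (e) (he : e ∈ E) : ∏ v ∈ e, (Pi.single i 1 : Fin n → ℝ) v = 0 := by
    obtain ⟨v, hv, hvi⟩ := exists_mem_ne (hE e he) i
    exact prod_eq_zero hv (Pi.single_eq_of_ne hvi 1)
  rw [wLag1, sum_pi_single', if_pos hi, sum_eq_zero fun e he => by rw [hedge e he, mul_zero],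
    add_zero]

theorem one_le_wLagMax {E1 : Finset (Fin n)} {E : Finset (Finset (Fin n))}
    (hE : ∀ e ∈ E, 1 < e.card) {i : Fin n} (hi : i ∈ E1) : 1 ≤ wLagMax α E1 E :=
  le_csSup bddAbove_wLag1_image ⟨_, single_mem_stdSimplex ℝ i, wLag1_single hE hi⟩

theorem wLagMax_mono {W E1 : Finset (Fin n)} {E' E : Finset (Finset (Fin n))} (hW : W ⊆ E1)
    (hE' : E' ⊆ E) (hα : ∀ e ∈ E, 0 ≤ α e.card) (hn : (simplexS n).Nonempty) :
    wLagMax α W E' ≤ wLagMax α E1 E := by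
  refine csSup_le (hn.image _) ?_
  rintro _ ⟨x, hx, rfl⟩
  refine le_trans ?_ (le_csSup bddAbove_wLag1_image ⟨x, hx, rfl⟩)
  exact add_le_add (sum_le_sum_of_subset_of_nonneg hW fun i _ _ => hx.1 i)
    (sum_le_sum_of_subset_of_nonneg hE' fun e he _ =>
      mul_nonneg (hα e he) (prod_nonneg fun v _ => hx.1 v))

theorem one_add_sum_le_wLagMax {W : Finset (Fin n)} {E : Finset (Finset (Fin n))}
    (hEW : ∀ e ∈ E, e ⊆ W) (hα : ∀ e ∈ E, 0 ≤ α e.card) {w : Fin n} (hw : w ∈ W)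
    {x : Fin n → ℝ} (hx : x ∈ simplexS n) :
    1 + ∑ e ∈ E, α e.card * ∏ v ∈ e, x v ≤ wLagMax α W E := by
  obtain ⟨hx0, hx1⟩ := hx
  have hdefect : 0 ≤ 1 - ∑ i ∈ W, x i :=
    sub_nonneg.2 (hx1 ▸ sum_le_sum_of_subset_of_nonneg (subset_univ W) fun i _ _ => hx0 i)
  set y : Fin n → ℝ := fun i => (if i ∈ W then x i else 0) +
    (Pi.single w (1 - ∑ i ∈ W, x i) : Fin n → ℝ) i
  have hsingle : 0 ≤ (Pi.single w (1 - ∑ i ∈ W, x i) : Fin n → ℝ) := Pi.single_nonneg.2 hdefect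
  have hsumW : ∑ i ∈ W, y i = 1 := by simp [y, sum_add_distrib, sum_ite_mem, hw]
  have hy : y ∈ simplexS n := by
    refine ⟨fun i => add_nonneg ?_ (hsingle i), ?_⟩
    · split_ifs
      exacts [hx0 i, le_rfl]
    · simp [y, sum_add_distrib, sum_ite_mem]
  have hxy (v) (hv : v ∈ W) : x v ≤ y v := by
    simpa only [y, if_pos hv] using le_add_of_nonneg_right (hsingle v)
  calc 1 + ∑ e ∈ E, α e.card * ∏ v ∈ e, x v ≤ wLag1 α W E y := by
        rw [wLag1, hsumW]
        exact add_le_add le_rfl (sum_le_sum fun e he => mul_le_mul_of_nonneg_left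
          (prod_le_prod (fun v _ => hx0 v) fun v hv => hxy v (hEW e he hv)) (hα e he))
    _ ≤ wLagMax α W E := le_csSup bddAbove_wLag1_image ⟨y, hy, rfl⟩

theorem filter_subset_sdiff_isolatedSet (E1 : Finset (Fin n)) (E : Finset (Finset (Fin n))) :
    E.filter (· ⊆ E1 \ isolatedSet E1 E) = E.filter (· ⊆ E1) :=
  filter_congr fun e he => ⟨fun h => h.trans sdiff_subset,
    fun h _ hv => mem_sdiff.2 ⟨h hv, fun hD => (mem_filter.1 hD).2 e he h hv⟩⟩

end WeightedLagrangian

theorem lagrangian_reduces_to_level_one_general {n : ℕ} (rs : Finset ℕ)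
    (hrs : ∀ r ∈ rs, 1 < r) (α : ℕ → ℝ) (hα : ∀ r ∈ rs, 0 ≤ α r)
    (hsum : ∑ r ∈ rs, α r / ((r - 1).factorial : ℝ) ≤ 1)
    (E1 : Finset (Fin n)) (hE1 : E1.Nonempty)
    (E : Finset (Finset (Fin n))) (hE : ∀ e ∈ E, e.card ∈ rs) :
    (E1 ≠ isolatedSet E1 E →
      wLagMax α E1 E
        = wLagMax α (E1 \ isolatedSet E1 E)
            (E.filter (fun e => e ⊆ E1 \ isolatedSet E1 E))) ∧
    (E1 = isolatedSet E1 E → wLagMax α E1 E = 1) := by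
  set D := isolatedSet E1 E
  have hαE : ∀ e ∈ E, 0 ≤ α e.card := fun e he => hα _ (hE e he)
  have hE2 : ∀ e ∈ E, 1 < e.card := fun e he => hrs _ (hE e he)
  have hupper : ∀ x ∈ simplexS n,
      wLag1 α E1 E x ≤ 1 + ∑ e ∈ E.filter (· ⊆ E1 \ D), α e.card * ∏ v ∈ e, x v :=
    fun x hx => filter_subset_sdiff_isolatedSet E1 E ▸
      wLag1_le_one_add_sum_filter_subset hα hsum hE hx E1
  obtain ⟨i, hi⟩ := hE1
  have hn : (simplexS n).Nonempty := ⟨_, single_mem_stdSimplex ℝ i⟩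
  refine ⟨fun hne => le_antisymm ?_ ?_, fun heq => le_antisymm ?_ (one_le_wLagMax hE2 hi)⟩
  · obtain ⟨w, hw⟩ : (E1 \ D).Nonempty :=
      sdiff_nonempty.2 fun h => hne (h.antisymm (filter_subset _ _))
    refine csSup_le (hn.image _) ?_
    rintro _ ⟨x, hx, rfl⟩
    exact (hupper x hx).trans (one_add_sum_le_wLagMax (fun e he => (mem_filter.1 he).2)
      (fun e he => hαE e (mem_filter.1 he).1) hw hx)
  · exact wLagMax_mono sdiff_subset (filter_subset _ _) hαE hn
  · have hno_edges : E.filter (· ⊆ E1 \ D) = ∅ := by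
      rw [← heq, sdiff_self]
      exact filter_false_of_mem fun e he h => by simpa [subset_empty.1 h] using hE2 e he
    refine csSup_le (hn.image _) ?_
    rintro _ ⟨x, hx, rfl⟩
    simpa [hno_edges] using hupper x hx

theorem lagrangian_reduces_to_level_one {n l : ℕ} (rs : Finset ℕ) (hl : rs.card = l)
    (hrs : ∀ r ∈ rs, 1 < r) (α : ℕ → ℝ) (hα : ∀ r ∈ rs, 0 ≤ α r)
    (hsum : ∑ r ∈ rs, α r / ((r - 1).factorial : ℝ) ≤ 1)
    (E1 : Finset (Fin n)) (hE1 : E1.Nonempty)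
    (E : Finset (Finset (Fin n))) (hE : ∀ e ∈ E, e.card ∈ rs)
    (hlevels : ∀ r ∈ rs, ∃ e ∈ E, e.card = r) :
    (E1 ≠ isolatedSet E1 E →
      wLagMax α E1 E
        = wLagMax α (E1 \ isolatedSet E1 E)
            (E.filter (fun e => e ⊆ E1 \ isolatedSet E1 E))) ∧
    (E1 = isolatedSet E1 E → wLagMax α E1 E = 1) :=
  lagrangian_reduces_to_level_one_general rs hrs α hα hsum E1 hE1 E hE
end

section
/- Let r_1 < ... < r_l with r_1 > 1 be integers, α_1,...,α_l > 0 with Σ α_i/(r_i−1)! ≤ 1, and let m, t satisfy t + Σ_i C(t, r_i) < m ≤ t+1 + Σ_i C(t+1, r_i). Suppose every {r_1,...,r_l}-hypergraph G with m−t−1 edges on n vertices satisfies L(G) ≤ L(C_{m−t−1, {r_1,...,r_l}}). Then every {1, r_1, ..., r_l}-hypergraph H with m edges on n vertices satisfies L(H) ≤ L(C_{m, {1,r_1,...,r_l}}). -/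
open Finset

def simplexNat : Set (ℕ → ℝ) :=
  {x | (∀ i, 0 ≤ x i) ∧ ∃ n : ℕ, (∑ i ∈ Finset.range n, x i) = 1 ∧ ∀ i, n ≤ i → x i = 0}

/-- Weighted Lagrangian polynomial: edges of cardinality r get weight `α r`. -/
def wLagN (α : ℕ → ℝ) (E : Finset (Finset ℕ)) (x : ℕ → ℝ) : ℝ :=
  ∑ e ∈ E, α e.card * ∏ v ∈ e, x v

def ColexLt (A B : Finset ℕ) : Prop :=
  ∃ k, k ∈ B ∧ k ∉ A ∧ ∀ j, k < j → (j ∈ A ↔ j ∈ B)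

/-- `E` consists of the first `|E|` sets with cardinalities in `T` in colex order. -/
def IsColexInitial (T : Finset ℕ) (E : Finset (Finset ℕ)) : Prop :=
  (∀ e ∈ E, e.card ∈ T) ∧ ∀ A B : Finset ℕ, B ∈ E → A.card ∈ T → ColexLt A B → A ∈ E

/-!
Split `H` into its singleton edges, on a vertex set `S`, and the remaining edges `F`. While
`|F| > m - t - 1`, some edge of `F` has a vertex `v ∉ S`, and `∑ α_r / (r - 1)! ≤ 1` bounds the
weight of the edges through `v` by `x_v`; so `v` can be moved into `S` and its star deleted.
Once `|F| ≤ m - t - 1`, the hypothesis bounds the Lagrangian of `F` by `L(C_{m-t-1})`, so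
`L(H) ≤ 1 + L(C_{m-t-1})`. Conversely, `C_m` consists of the `t + 1` singletons of
`{0, …, t}` together with `C_{m-t-1}`, which lives on these vertices; putting all the mass on
them gives `L(C_m) ≥ 1 + L(C_{m-t-1})`.
-/

open scoped Nat

lemma sum_le_one_of_mem_simplexNat {x : ℕ → ℝ} (hx : x ∈ simplexNat) (A : Finset ℕ) :
    ∑ i ∈ A, x i ≤ 1 := by
  obtain ⟨hx0, N, hsum, hzero⟩ := hx
  calc ∑ i ∈ A, x i ≤ ∑ i ∈ A ∪ range N, x i :=
        sum_le_sum_of_subset_of_nonneg subset_union_left fun i _ _ => hx0 i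
    _ = ∑ i ∈ range N, x i :=
        (sum_subset subset_union_right fun i _ hi => hzero i (by simpa using hi)).symm
    _ = 1 := hsum

lemma simplexNat_nonempty : simplexNat.Nonempty :=
  ⟨Pi.single 0 1, fun i => by simp only [Pi.single_apply]; split_ifs <;> norm_num, 1, by simp,
    fun i hi => by simp [Pi.single_apply]; omega⟩

lemma bddAbove_wLagN_image (α : ℕ → ℝ) (E : Finset (Finset ℕ)) :
    BddAbove (wLagN α E '' simplexNat) := by
  refine ⟨∑ e ∈ E, |α e.card|, ?_⟩
  rintro _ ⟨x, hx, rfl⟩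
  refine sum_le_sum fun e _ => ?_
  have hprod : |∏ v ∈ e, x v| ≤ 1 := by
    rw [abs_prod]
    exact prod_le_one (fun v _ => abs_nonneg _) fun v _ => by
      simpa [abs_of_nonneg (hx.1 v)] using sum_le_one_of_mem_simplexNat hx {v}
  calc α e.card * ∏ v ∈ e, x v ≤ |α e.card * ∏ v ∈ e, x v| := le_abs_self _
    _ ≤ |α e.card| := by
      rw [abs_mul]; exact mul_le_of_le_one_right (abs_nonneg _) hprod

lemma le_sSup_wLagN (α : ℕ → ℝ) (E : Finset (Finset ℕ)) {x : ℕ → ℝ} (hx : x ∈ simplexNat) :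
    wLagN α E x ≤ sSup (wLagN α E '' simplexNat) :=
  le_csSup (bddAbove_wLagN_image α E) ⟨x, hx, rfl⟩

lemma pow_succ_add_mul_le_add_pow_succ {a b : ℝ} (ha : 0 ≤ a) (hb : 0 ≤ b) (k : ℕ) :
    a ^ (k + 1) + (k + 1) * a ^ k * b ≤ (a + b) ^ (k + 1) := by
  induction k with
  | zero => simp
  | succ k ih =>
    calc a ^ (k + 2) + ((k + 1 : ℕ) + 1) * a ^ (k + 1) * b
        ≤ (a + b) * (a ^ (k + 1) + (k + 1) * a ^ k * b) := by
          have hexpand : (a + b) * (a ^ (k + 1) + (k + 1) * a ^ k * b) =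
              a ^ (k + 2) + (k + 1 + 1) * a ^ (k + 1) * b + (k + 1) * (a ^ k * b ^ 2) := by ring
          push_cast; rw [hexpand]; exact le_add_of_nonneg_right (by positivity)
      _ ≤ (a + b) ^ (k + 2) := by
          rw [pow_succ' _ (k + 1)]; exact mul_le_mul_of_nonneg_left ih (by positivity)

lemma sum_powersetCard_insert_prod_le {ι : Type*} [DecidableEq ι] {x : ι → ℝ} {a : ι}
    {V : Finset ι} (ha : a ∉ V) (hx : ∀ i ∈ insert a V, 0 ≤ x i) (k : ℕ) :
    ∑ s ∈ (insert a V).powersetCard (k + 1), ∏ i ∈ s, x i ≤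
      ∑ s ∈ V.powersetCard (k + 1), ∏ i ∈ s, x i + x a * ∑ s ∈ V.powersetCard k, ∏ i ∈ s, x i := by
  have hprod_nonneg : ∀ s ⊆ insert a V, 0 ≤ ∏ i ∈ s, x i := fun s hs =>
    prod_nonneg fun i hi => hx i (hs hi)
  rw [powersetCard_succ_insert ha]
  refine (le_add_of_nonneg_right (sum_nonneg fun s hs => ?_)).trans
    (sum_union_inter.trans_le (add_le_add le_rfl ?_))
  · exact hprod_nonneg s ((mem_powersetCard.1 (mem_inter.1 hs).1).1.trans (subset_insert a V))
  refine (sum_image_le_of_nonneg fun s hs => ?_).trans_eq ?_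
  · obtain ⟨u, hu, rfl⟩ := mem_image.1 hs
    exact hprod_nonneg _ (insert_subset_insert a (mem_powersetCard.1 hu).1)
  rw [mul_sum]
  exact sum_congr rfl fun s hs => prod_insert fun h => ha ((mem_powersetCard.1 hs).1 h)

lemma factorial_mul_sum_powersetCard_prod_le {ι : Type*} [DecidableEq ι] {x : ι → ℝ}
    (V : Finset ι) (hx : ∀ i ∈ V, 0 ≤ x i) (k : ℕ) :
    (k ! : ℝ) * ∑ s ∈ V.powersetCard k, ∏ i ∈ s, x i ≤ (∑ i ∈ V, x i) ^ k := by
  induction V using Finset.induction_on generalizing k with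
  | empty =>
    cases k with
    | zero => simp
    | succ k => simp [powersetCard_eq_empty.2 (by simp : (∅ : Finset ι).card < k + 1)]
  | insert a V ha ih =>
    cases k with
    | zero => simp
    | succ k =>
      have hV : ∀ i ∈ V, 0 ≤ x i := fun i hi => hx i (mem_insert_of_mem hi)
      have hxa : 0 ≤ x a := hx a (mem_insert_self a V)
      calc ((k + 1)! : ℝ) * ∑ s ∈ (insert a V).powersetCard (k + 1), ∏ i ∈ s, x i
          ≤ (k + 1)! * ∑ s ∈ V.powersetCard (k + 1), ∏ i ∈ s, x i +
              (k + 1) * x a * (k ! * ∑ s ∈ V.powersetCard k, ∏ i ∈ s, x i) := by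
            rw [Nat.factorial_succ]; push_cast
            nlinarith [mul_le_mul_of_nonneg_left (sum_powersetCard_insert_prod_le ha hx k)
              (by positivity : (0 : ℝ) ≤ (k + 1) * k !)]
        _ ≤ (∑ i ∈ V, x i) ^ (k + 1) + (k + 1) * (∑ i ∈ V, x i) ^ k * x a := by
            nlinarith [ih hV (k + 1), mul_le_mul_of_nonneg_left (ih hV k)
              (by positivity : (0 : ℝ) ≤ (k + 1) * x a)]
        _ ≤ (∑ i ∈ insert a V, x i) ^ (k + 1) := by
            rw [sum_insert ha, add_comm (x a)]
            exact pow_succ_add_mul_le_add_pow_succ (sum_nonneg hV) hxa k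

lemma sum_prod_le_inv_factorial {x : ℕ → ℝ} (hx : x ∈ simplexNat) {𝒜 : Finset (Finset ℕ)}
    {k : ℕ} (h𝒜 : ∀ s ∈ 𝒜, s.card = k) : ∑ s ∈ 𝒜, ∏ i ∈ s, x i ≤ 1 / k ! := by
  set V := 𝒜.sup id
  have hsub : 𝒜 ⊆ V.powersetCard k := fun s hs =>
    mem_powersetCard.2 ⟨le_sup (f := id) hs, h𝒜 s hs⟩
  have hmono : ∑ s ∈ 𝒜, ∏ i ∈ s, x i ≤ ∑ s ∈ V.powersetCard k, ∏ i ∈ s, x i :=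
    sum_le_sum_of_subset_of_nonneg hsub fun s _ _ => prod_nonneg fun i _ => hx.1 i
  have hpow : (∑ i ∈ V, x i) ^ k ≤ 1 :=
    pow_le_one₀ (sum_nonneg fun i _ => hx.1 i) (sum_le_one_of_mem_simplexNat hx V)
  rw [le_div_iff₀ (by positivity), mul_comm]
  nlinarith [factorial_mul_sum_powersetCard_prod_le V (fun i _ => hx.1 i) k,
    (by positivity : (0 : ℝ) < k !)]

def completeHypergraph {ι : Type*} (T : Finset ℕ) (V : Finset ι) : Finset (Finset ι) :=
  V.powerset.filter fun e => e.card ∈ T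

section completeHypergraph

variable {ι : Type*} {T : Finset ℕ} {V : Finset ι} {e : Finset ι}

@[simp]
lemma mem_completeHypergraph : e ∈ completeHypergraph T V ↔ e ⊆ V ∧ e.card ∈ T := by
  simp [completeHypergraph]

lemma card_completeHypergraph (T : Finset ℕ) (V : Finset ι) :
    (completeHypergraph T V).card = ∑ r ∈ T, V.card.choose r := by
  rw [card_eq_sum_card_fiberwise fun e he => (mem_completeHypergraph.1 he).2]
  refine sum_congr rfl fun r hr => ?_
  rw [← card_powersetCard, powersetCard_eq_filter, completeHypergraph, filter_filter]
  congr 1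
  exact filter_congr fun e _ => ⟨fun h => h.2, fun h => ⟨h ▸ hr, h⟩⟩

end completeHypergraph

section Lagrangian

variable {α : ℕ → ℝ} {T : Finset ℕ} {x : ℕ → ℝ}

lemma wLagN_filter_add_filter_not (α : ℕ → ℝ) (F : Finset (Finset ℕ)) (p : Finset ℕ → Prop)
    [DecidablePred p] (x : ℕ → ℝ) :
    wLagN α (F.filter p) x + wLagN α (F.filter fun e => ¬ p e) x = wLagN α F x :=
  sum_filter_add_sum_filter_not F p _

lemma wLagN_image_singleton (α : ℕ → ℝ) (S : Finset ℕ) (x : ℕ → ℝ) :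
    wLagN α (S.image ({·})) x = α 1 * ∑ v ∈ S, x v := by
  rw [wLagN, sum_image fun _ _ _ _ h => singleton_injective h, mul_sum]
  simp

lemma wLagN_mono (hα : ∀ r ∈ T, 0 ≤ α r) (hx : ∀ i, 0 ≤ x i) {F G : Finset (Finset ℕ)}
    (hFG : F ⊆ G) (hG : ∀ e ∈ G, e.card ∈ T) : wLagN α F x ≤ wLagN α G x :=
  sum_le_sum_of_subset_of_nonneg hFG fun e he _ =>
    mul_nonneg (hα _ (hG e he)) (prod_nonneg fun v _ => hx v)

/-- The link of `v` is an `{r - 1}`-graph with weights `α r`, whose Lagrangian is at most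
`∑ α r / (r - 1)! ≤ 1`. -/
lemma wLagN_filter_mem_le (hα : ∀ r ∈ T, 0 ≤ α r)
    (hsum : ∑ r ∈ T, α r / ((r - 1)! : ℝ) ≤ 1) {F : Finset (Finset ℕ)}
    (hF : ∀ e ∈ F, e.card ∈ T) (hx : x ∈ simplexNat) (v : ℕ) :
    wLagN α (F.filter (v ∈ ·)) x ≤ x v := by
  set Fv := F.filter (v ∈ ·)
  have hFv : ∀ e ∈ Fv, v ∈ e ∧ e.card ∈ T := fun e he =>
    ⟨(mem_filter.1 he).2, hF e (mem_filter.1 he).1⟩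
  have hlink : wLagN α Fv x = x v * ∑ e ∈ Fv, α e.card * ∏ u ∈ e.erase v, x u := by
    rw [wLagN, mul_sum]
    exact sum_congr rfl fun e he => by rw [← mul_prod_erase e x (hFv e he).1]; ring
  have hclass : ∀ r ∈ T, ∑ e ∈ Fv.filter (·.card = r), α e.card * ∏ u ∈ e.erase v, x u ≤
      α r / ((r - 1)! : ℝ) := by
    intro r hr
    have hinj : Set.InjOn (·.erase v) (Fv.filter (·.card = r) : Set (Finset ℕ)) :=
      (erase_injOn' v).mono fun e he => (hFv e (mem_filter.1 he).1).1
    rw [sum_congr rfl fun e he => by rw [(mem_filter.1 he).2], ← mul_sum, ← mul_one_div]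
    refine mul_le_mul_of_nonneg_left ?_ (hα r hr)
    rw [← sum_image (f := fun s => ∏ u ∈ s, x u) hinj]
    refine sum_prod_le_inv_factorial hx fun s hs => ?_
    obtain ⟨e, he, rfl⟩ := mem_image.1 hs
    rw [card_erase_of_mem (hFv e (mem_filter.1 he).1).1, (mem_filter.1 he).2]
  have hlink_le : ∑ e ∈ Fv, α e.card * ∏ u ∈ e.erase v, x u ≤ 1 := by
    rw [← sum_fiberwise_of_maps_to fun e he => (hFv e he).2]
    exact (sum_le_sum hclass).trans hsum
  rw [hlink]
  exact mul_le_of_le_one_right (hx.1 v) hlink_le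

lemma wLagN_le_of_card_le {V : Finset ℕ} (hα : ∀ r ∈ T, 0 ≤ α r) (hx : ∀ i, 0 ≤ x i)
    {N : ℕ} {L : ℝ} (hN : N ≤ (completeHypergraph T V).card)
    (hL : ∀ G ⊆ completeHypergraph T V, G.card = N → wLagN α G x ≤ L)
    {F : Finset (Finset ℕ)} (hF : F ⊆ completeHypergraph T V) (hFN : F.card ≤ N) :
    wLagN α F x ≤ L := by
  obtain ⟨G, hFG, hG, hGN⟩ := exists_subsuperset_card_eq hF hFN hN
  exact (wLagN_mono hα hx hFG fun e he => (mem_completeHypergraph.1 (hG he)).2).trans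
    (hL G hG hGN)

/-- While `F` is too large, some edge leaves `S`; moving one of its vertices `v` into `S`
and deleting the star of `v` keeps `|S| + |F| ≤ m` and does not decrease the left-hand
side. -/
lemma sum_add_wLagN_le (hα : ∀ r ∈ T, 0 ≤ α r) (hsum : ∑ r ∈ T, α r / ((r - 1)! : ℝ) ≤ 1)
    (hx : x ∈ simplexNat) {V : Finset ℕ} {m t : ℕ} {L : ℝ}
    (hm : t + ∑ r ∈ T, t.choose r < m)
    (hsmall : ∀ F ⊆ completeHypergraph T V, F.card ≤ m - t - 1 → wLagN α F x ≤ L)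
    {F : Finset (Finset ℕ)} (hF : F ⊆ completeHypergraph T V) (S : Finset ℕ)
    (hSF : S.card + F.card ≤ m) :
    ∑ v ∈ S, x v + wLagN α F x ≤ 1 + L := by
  induction F using Finset.strongInduction generalizing S with
  | H F ih =>
    by_cases hFsmall : F.card ≤ m - t - 1
    · linarith [hsmall F hF hFsmall, sum_le_one_of_mem_simplexNat hx S]
    have hFT : ∀ e ∈ F, e.card ∈ T := fun e he => (mem_completeHypergraph.1 (hF he)).2
    obtain ⟨e, he, v, hve, hvS⟩ : ∃ e ∈ F, ∃ v ∈ e, v ∉ S := by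
      by_contra! hcon
      have hFS : F ⊆ completeHypergraph T S := fun e he =>
        mem_completeHypergraph.2 ⟨hcon e he, hFT e he⟩
      have hS : ∑ r ∈ T, S.card.choose r ≤ ∑ r ∈ T, t.choose r :=
        sum_le_sum fun r _ => Nat.choose_le_choose r (by omega)
      have := card_completeHypergraph T S ▸ card_le_card hFS
      omega
    have hlt : F.filter (v ∉ ·) ⊂ F := filter_ssubset.2 ⟨e, he, not_not.2 hve⟩
    have hrec := ih _ hlt ((filter_subset _ _).trans hF) (insert v S) <| by
      rw [card_insert_of_notMem hvS]; have := card_lt_card hlt; omega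
    rw [sum_insert hvS] at hrec
    rw [← wLagN_filter_add_filter_not α F (v ∈ ·) x]
    linarith [wLagN_filter_mem_le hα hsum hFT hx v]

lemma wLagN_le_one_add (hα1 : α 1 = 1) (hα : ∀ r ∈ T, 0 ≤ α r)
    (hsum : ∑ r ∈ T, α r / ((r - 1)! : ℝ) ≤ 1) (hx : x ∈ simplexNat) {V : Finset ℕ}
    {m t : ℕ} {L : ℝ} (hm : t + ∑ r ∈ T, t.choose r < m)
    (hsmall : ∀ F ⊆ completeHypergraph T V, F.card ≤ m - t - 1 → wLagN α F x ≤ L)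
    {H : Finset (Finset ℕ)} (hH : H ⊆ completeHypergraph (insert 1 T) V) (hHm : H.card ≤ m) :
    wLagN α H x ≤ 1 + L := by
  set S := V.filter fun v => {v} ∈ H
  have hS : H.filter (·.card = 1) = S.image ({·}) := by
    ext e
    simp only [mem_filter, mem_image, card_eq_one, S]
    constructor
    · rintro ⟨he, v, rfl⟩
      exact ⟨v, ⟨(mem_completeHypergraph.1 (hH he)).1 (mem_singleton_self v), he⟩, rfl⟩
    · rintro ⟨v, ⟨-, hv⟩, rfl⟩
      exact ⟨hv, v, rfl⟩
  have hrest : H.filter (¬ ·.card = 1) ⊆ completeHypergraph T V := fun e he => by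
    obtain ⟨he, he1⟩ := mem_filter.1 he
    obtain ⟨heV, heT⟩ := mem_completeHypergraph.1 (hH he)
    exact mem_completeHypergraph.2 ⟨heV, (mem_insert.1 heT).resolve_left he1⟩
  have hcard : S.card + (H.filter (¬ ·.card = 1)).card ≤ m := by
    rwa [← card_image_of_injective S singleton_injective, ← hS, card_filter_add_card_filter_not]
  rw [← wLagN_filter_add_filter_not α H (·.card = 1) x, hS, wLagN_image_singleton, hα1, one_mul]
  exact sum_add_wLagN_le hα hsum hx hm hsmall hrest S hcard

end Lagrangian

lemma colexLt_iff_toColex_lt {A B : Finset ℕ} : ColexLt A B ↔ toColex A < toColex B := by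
  rw [Colex.lt_iff_exists_filter_lt]
  simp only [ColexLt, mem_sdiff, Finset.ext_iff, mem_filter]
  constructor
  · rintro ⟨k, hkB, hkA, hk⟩
    exact ⟨k, ⟨hkB, hkA⟩, fun j => and_congr_left fun hj => hk j hj⟩
  · rintro ⟨k, ⟨hkB, hkA⟩, hk⟩
    exact ⟨k, hkB, hkA, fun j hj => by simpa [hj] using hk j⟩

namespace IsColexInitial

variable {T : Finset ℕ} {E E' : Finset (Finset ℕ)}

lemma mem_of_toColex_lt (hE : IsColexInitial T E) {A B : Finset ℕ} (hB : B ∈ E)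
    (hA : A.card ∈ T) (hAB : toColex A < toColex B) : A ∈ E :=
  hE.2 A B hB hA (colexLt_iff_toColex_lt.2 hAB)

lemma subset_of_card_le (hE : IsColexInitial T E) (hE' : IsColexInitial T E')
    (h : E.card ≤ E'.card) : E ⊆ E' := by
  intro B hB
  by_contra hB'
  have hE'E : E' ⊆ E := fun A hA => by
    rcases lt_trichotomy (toColex A) (toColex B) with hAB | hAB | hAB
    · exact hE.mem_of_toColex_lt hB (hE'.1 A hA) hAB
    · rwa [toColex.injective hAB]
    · exact absurd (hE'.mem_of_toColex_lt hA (hE.1 B hB) hAB) hB'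
  have := card_lt_card ⟨hE'E, fun h => hB' (h hB)⟩
  omega

lemma eq_of_card_eq (hE : IsColexInitial T E) (hE' : IsColexInitial T E')
    (h : E.card = E'.card) : E = E' :=
  (hE.subset_of_card_le hE' h.le).antisymm (hE'.subset_of_card_le hE h.ge)

lemma subset_range (hE : IsColexInitial T E) {s : ℕ} (hcard : E.card ≤ ∑ r ∈ T, s.choose r)
    {e : Finset ℕ} (he : e ∈ E) : e ⊆ range s := by
  by_contra hes
  have hlt : ∀ A ∈ completeHypergraph T (range s), toColex A < toColex e := fun A hA => by
    by_contra! h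
    exact hes fun b hb => mem_range.2 <| Colex.forall_lt_mono h
      (fun a ha => mem_range.1 ((mem_completeHypergraph.1 hA).1 ha)) b hb
  have hsub : insert e (completeHypergraph T (range s)) ⊆ E := insert_subset he fun A hA =>
    hE.mem_of_toColex_lt he (mem_completeHypergraph.1 hA).2 (hlt A hA)
  have := card_le_card hsub
  rw [card_insert_of_notMem fun h => (hlt e h).false, card_completeHypergraph, card_range] at this
  omega

lemma completeHypergraph_range_subset (hE : IsColexInitial T E) {s : ℕ}
    (hcard : ∑ r ∈ T, s.choose r ≤ E.card) : completeHypergraph T (range s) ⊆ E := by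
  intro A hA
  by_contra hAE
  obtain ⟨hAs, hAT⟩ := mem_completeHypergraph.1 hA
  have hsub : E ⊆ (completeHypergraph T (range s)).erase A := fun B hB => by
    have hBA : toColex B < toColex A := lt_of_not_ge fun h => hAE <|
      h.eq_or_lt.elim (fun h => toColex.injective h ▸ hB) (hE.mem_of_toColex_lt hB hAT)
    refine mem_erase.2
      ⟨fun h => hBA.ne (h ▸ rfl), mem_completeHypergraph.2 ⟨fun b hb => ?_, hE.1 B hB⟩⟩
    exact mem_range.2 (Colex.forall_lt_mono hBA.le (fun a ha => mem_range.1 (hAs ha)) b hb)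
  have hpos := card_pos.2 ⟨A, hA⟩
  have := card_le_card hsub
  rw [card_erase_of_mem hA] at this
  rw [card_completeHypergraph, card_range] at this hpos
  omega

lemma disjoint_image_singleton (hE : IsColexInitial T E) (h1T : 1 ∉ T) (V : Finset ℕ) :
    Disjoint (V.image ({·})) E := disjoint_left.2 fun e he heE => by
  obtain ⟨i, -, rfl⟩ := mem_image.1 he
  exact h1T (card_singleton i ▸ hE.1 _ heE)

lemma eq_image_singleton_union (hE : IsColexInitial T E) (hE' : IsColexInitial (insert 1 T) E')
    {t : ℕ} (h1T : 1 ∉ T) (hlow : ∑ r ∈ T, t.choose r ≤ E.card)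
    (hhigh : E.card ≤ ∑ r ∈ T, (t + 1).choose r) (hcard : E'.card = t + 1 + E.card) :
    E' = (range (t + 1)).image ({·}) ∪ E := by
  refine hE'.eq_of_card_eq ⟨fun e he => ?_, fun A B hB hA hAB => ?_⟩ ?_
  · rcases mem_union.1 he with he | he
    · obtain ⟨i, -, rfl⟩ := mem_image.1 he
      simp
    · exact mem_insert_of_mem (hE.1 e he)
  · rw [colexLt_iff_toColex_lt] at hAB
    rcases mem_union.1 hB, mem_insert.1 hA with ⟨hB | hB, hA1 | hAT⟩
    · obtain ⟨j, hj, rfl⟩ := mem_image.1 hB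
      obtain ⟨i, rfl⟩ := card_eq_one.1 hA1
      have hij := Colex.toColex_lt_singleton.1 hAB i (mem_singleton_self i)
      exact mem_union_left _ (mem_image.2 ⟨i, mem_range.2 (hij.trans (mem_range.1 hj)), rfl⟩)
    · obtain ⟨j, hj, rfl⟩ := mem_image.1 hB
      refine mem_union_right _ (hE.completeHypergraph_range_subset hlow ?_)
      refine mem_completeHypergraph.2 ⟨fun a ha => mem_range.2 ?_, hAT⟩
      exact (Colex.toColex_lt_singleton.1 hAB a ha).trans_le (Nat.lt_succ_iff.1 (mem_range.1 hj))
    · obtain ⟨i, rfl⟩ := card_eq_one.1 hA1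
      have hi := Colex.forall_lt_mono hAB.le (fun b hb => mem_range.1 (hE.subset_range hhigh hB hb))
        i (mem_singleton_self i)
      exact mem_union_left _ (mem_image.2 ⟨i, mem_range.2 hi, rfl⟩)
    · exact mem_union_right _ (hE.mem_of_toColex_lt hB hAT hAB)
  · rw [card_union_of_disjoint (hE.disjoint_image_singleton h1T _),
      card_image_of_injective _ singleton_injective, card_range, hcard]

end IsColexInitial

lemma exists_simplexNat_sum_range_eq_one {x : ℕ → ℝ} (hx : x ∈ simplexNat) (t : ℕ) :
    ∃ y ∈ simplexNat, ∑ i ∈ range (t + 1), y i = 1 ∧ ∀ i < t + 1, x i ≤ y i := by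
  set y : ℕ → ℝ := fun i => if i < t then x i else if i = t then 1 - ∑ j ∈ range t, x j else 0
  have hy : ∑ i ∈ range (t + 1), y i = 1 := by
    rw [sum_range_succ, sum_congr rfl fun i hi => if_pos (mem_range.1 hi)]
    simp [y]
  have hxt := sum_le_one_of_mem_simplexNat hx (range (t + 1))
  rw [sum_range_succ] at hxt
  refine ⟨y, ⟨fun i => ?_, t + 1, hy, fun i hi => ?_⟩, hy, fun i hi => ?_⟩
  · simp only [y]
    split_ifs <;> linarith [hx.1 i, hx.1 t]
  · simp only [y]
    rw [if_neg (by omega), if_neg (by omega)]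
  · simp only [y]
    split_ifs with h1 h2
    · rfl
    · subst h2; linarith
    · omega

lemma wLagN_union {α : ℕ → ℝ} {F G : Finset (Finset ℕ)} (h : Disjoint F G) (x : ℕ → ℝ) :
    wLagN α (F ∪ G) x = wLagN α F x + wLagN α G x :=
  sum_union h

/-- Moving the mass outside `range t` onto the vertex `t` makes the singletons of
`range (t + 1)` contribute exactly `1` without decreasing the Lagrangian of `E`. -/
lemma one_add_sSup_le_sSup_image_singleton_union {α : ℕ → ℝ} (hα1 : α 1 = 1) {T : Finset ℕ}
    (hα : ∀ r ∈ T, 0 ≤ α r) {E : Finset (Finset ℕ)} (hE : IsColexInitial T E) (h1T : 1 ∉ T)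
    {t : ℕ} (hEt : ∀ e ∈ E, e ⊆ range (t + 1)) :
    1 + sSup (wLagN α E '' simplexNat) ≤
      sSup (wLagN α ((range (t + 1)).image ({·}) ∪ E) '' simplexNat) := by
  rw [← le_sub_iff_add_le']
  refine csSup_le (simplexNat_nonempty.image _) ?_
  rintro _ ⟨x, hx, rfl⟩
  obtain ⟨y, hy, hy1, hxy⟩ := exists_simplexNat_sum_range_eq_one hx t
  have hmono : wLagN α E x ≤ wLagN α E y := sum_le_sum fun e he =>
    mul_le_mul_of_nonneg_left (prod_le_prod (fun v _ => hx.1 v) fun v hv =>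
      hxy v (mem_range.1 (hEt e he hv))) (hα _ (hE.1 e he))
  have hD := le_sSup_wLagN α ((range (t + 1)).image ({·}) ∪ E) hy
  rw [wLagN_union (hE.disjoint_image_singleton h1T _), wLagN_image_singleton, hα1, one_mul,
    hy1] at hD
  linarith

theorem frankl_furedi_reduction_general (rs : Finset ℕ)
    (hrs : ∀ r ∈ rs, 1 < r) (α : ℕ → ℝ) (hα1 : α 1 = 1) (hα : ∀ r ∈ rs, 0 < α r)
    (hsum : ∑ r ∈ rs, α r / ((r - 1).factorial : ℝ) ≤ 1)
    (m t n : ℕ)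
    (hm1 : t + ∑ r ∈ rs, t.choose r < m)
    (hm2 : m ≤ t + 1 + ∑ r ∈ rs, (t + 1).choose r)
    (C1 : Finset (Finset ℕ)) (hC1m : C1.card = m - t - 1) (hC1 : IsColexInitial rs C1)
    (C2 : Finset (Finset ℕ)) (hC2m : C2.card = m) (hC2 : IsColexInitial (insert 1 rs) C2)
    (hyp : ∀ G : Finset (Finset ℕ), (∀ e ∈ G, e.card ∈ rs) →
      (∀ e ∈ G, e ⊆ Finset.range n) → G.card = m - t - 1 →
      sSup (wLagN α G '' simplexNat) ≤ sSup (wLagN α C1 '' simplexNat)) :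
    ∀ H : Finset (Finset ℕ), (∀ e ∈ H, e.card ∈ insert 1 rs) →
      (∀ e ∈ H, e ⊆ Finset.range n) → H.card = m →
      sSup (wLagN α H '' simplexNat) ≤ sSup (wLagN α C2 '' simplexNat) := by
  intro H hHc hHs hHm
  have h1rs : 1 ∉ rs := fun h => (hrs 1 h).false
  have hα' : ∀ r ∈ rs, 0 ≤ α r := fun r hr => (hα r hr).le
  have hH : H ⊆ completeHypergraph (insert 1 rs) (range n) := fun e he =>
    mem_completeHypergraph.2 ⟨hHs e he, hHc e he⟩
  -- `H` has more edges than the complete `{1} ∪ rs`-graph on `t` vertices, so `t < n`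
  have hroom : ∑ r ∈ rs, (t + 1).choose r ≤ (completeHypergraph rs (range n)).card := by
    rw [card_completeHypergraph, card_range]
    refine sum_le_sum fun r _ => Nat.choose_le_choose r ?_
    by_contra! hn
    have hHn := card_completeHypergraph _ _ ▸ card_le_card hH
    rw [card_range, sum_insert h1rs, Nat.choose_one_right] at hHn
    have : ∑ r ∈ rs, n.choose r ≤ ∑ r ∈ rs, t.choose r :=
      sum_le_sum fun r _ => Nat.choose_le_choose r (by omega)
    omega
  rw [hC1.eq_image_singleton_union hC2 (t := t) h1rs (by omega) (by omega) (by omega)]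
  refine (csSup_le (simplexNat_nonempty.image _) ?_).trans
    (one_add_sSup_le_sSup_image_singleton_union hα1 hα' hC1 h1rs
      fun e he => hC1.subset_range (by omega) he)
  rintro _ ⟨x, hx, rfl⟩
  refine wLagN_le_one_add hα1 hα' hsum hx hm1 (fun F hF hFm => ?_) hH hHm.le
  refine wLagN_le_of_card_le hα' hx.1 (by omega) (fun G hG hGm => ?_) hF hFm
  exact (le_sSup_wLagN α G hx).trans (hyp G (fun e he => (mem_completeHypergraph.1 (hG he)).2)
    (fun e he => (mem_completeHypergraph.1 (hG he)).1) hGm)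

theorem frankl_furedi_reduction {l : ℕ} (rs : Finset ℕ) (hl : rs.card = l)
    (hrs : ∀ r ∈ rs, 1 < r) (α : ℕ → ℝ) (hα1 : α 1 = 1) (hα : ∀ r ∈ rs, 0 < α r)
    (hsum : ∑ r ∈ rs, α r / ((r - 1).factorial : ℝ) ≤ 1)
    (m t n : ℕ)
    (hm1 : t + ∑ r ∈ rs, t.choose r < m)
    (hm2 : m ≤ t + 1 + ∑ r ∈ rs, (t + 1).choose r)
    (C1 : Finset (Finset ℕ)) (hC1m : C1.card = m - t - 1) (hC1 : IsColexInitial rs C1)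
    (C2 : Finset (Finset ℕ)) (hC2m : C2.card = m) (hC2 : IsColexInitial (insert 1 rs) C2)
    (hyp : ∀ G : Finset (Finset ℕ), (∀ e ∈ G, e.card ∈ rs) →
      (∀ e ∈ G, e ⊆ Finset.range n) → G.card = m - t - 1 →
      sSup (wLagN α G '' simplexNat) ≤ sSup (wLagN α C1 '' simplexNat)) :
    ∀ H : Finset (Finset ℕ), (∀ e ∈ H, e.card ∈ insert 1 rs) →
      (∀ e ∈ H, e ⊆ Finset.range n) → H.card = m →
      sSup (wLagN α H '' simplexNat) ≤ sSup (wLagN α C2 '' simplexNat) :=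
  frankl_furedi_reduction_general rs hrs α hα1 hα hsum m t n hm1 hm2 C1 hC1m hC1 C2 hC2m hC2 hyp
end
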